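/- Unbiasedness of the RS+FD[OUE-z] estimator (Theorem 'est_oue_z'): let d ≥ 1 be an integer, p, q ∈ [0,1] with p ≠ q, and let n be a positive integer. Suppose that among the n users exactly f·n hold the value v (where 0 ≤ f ≤ 1 and f·n is an integer) and each user independently reports the bit corresponding to v as 1 with probability p/d + (d−1)·q/d if it holds v and with probability q otherwise. Then the estimator f̂ = d·(N − n·q)/(n·(p−q)), where N is the number of users reporting bit 1 for v, satisfies E[f̂] = f. -/

import Mathlib

open MeasureTheory ProbabilityTheory

/-!
Each report bit is a Bernoulli variable, so by linearity of expectation the expected number `N`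
of 1-reports is `f n P + (1 - f) n q = f n (P - q) + n q`, where `P = p/d + (d-1) q/d` is the
probability for a holder of `v`. Since `P - q = (p - q)/d`, the affine map `N ↦ d (N - n q)/(n (p - q))`
sends this mean to `f`.
-/

lemma ite_one_zero_eq_indicator {Ω : Type*} (X : Ω → Bool) :
    (fun ω => if X ω then (1 : ℝ) else 0) = {ω | X ω = true}.indicator 1 := by
  ext ω
  cases h : X ω <;> simp [h]

section BoolIndicator

variable {Ω : Type*} [MeasurableSpace Ω] {μ : Measure Ω}

lemma integrable_ite_one_zero [IsFiniteMeasure μ] {X : Ω → Bool} (hX : Measurable X) :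
    Integrable (fun ω => if X ω then (1 : ℝ) else 0) μ := by
  rw [ite_one_zero_eq_indicator]
  exact (integrable_const 1).indicator (hX (measurableSet_singleton true))

lemma integral_ite_one_zero {X : Ω → Bool} (hX : Measurable X) :
    ∫ ω, (if X ω then (1 : ℝ) else 0) ∂μ = μ.real {ω | X ω = true} := by
  rw [ite_one_zero_eq_indicator]
  exact integral_indicator_one (hX (measurableSet_singleton true))

lemma integral_sum_ite_one_zero [IsFiniteMeasure μ] {ι : Type*} {X : ι → Ω → Bool}
    (hX : ∀ i, Measurable (X i)) (s : Finset ι) :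
    ∫ ω, (∑ i ∈ s, if X i ω then (1 : ℝ) else 0) ∂μ = ∑ i ∈ s, μ.real {ω | X i ω = true} := by
  rw [integral_finsetSum s fun i _ => integrable_ite_one_zero (hX i)]
  exact Finset.sum_congr rfl fun i _ => integral_ite_one_zero (hX i)

lemma integral_mul_sub_div [IsProbabilityMeasure μ] {X : Ω → ℝ} (hX : Integrable X μ)
    (a b c : ℝ) : ∫ ω, a * (X ω - b) / c ∂μ = a * (∫ ω, X ω ∂μ - b) / c := by
  rw [integral_div, integral_const_mul, integral_sub hX (integrable_const b), integral_const,
    probReal_univ, one_smul]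

end BoolIndicator

lemma Finset.sum_ite_eq_card_mul_add {ι : Type*} (s : Finset ι) (b : ι → Bool) (a c : ℝ) :
    ∑ i ∈ s, (if b i then a else c)
      = (∑ i ∈ s, if b i then (1 : ℝ) else 0) * (a - c) + s.card * c := by
  rw [Finset.sum_mul, ← nsmul_eq_mul, ← Finset.sum_const, ← Finset.sum_add_distrib]
  exact Finset.sum_congr rfl fun i _ => by cases b i <;> simp

lemma mixed_prob_sub (p q : ℝ) {d : ℝ} (hd : d ≠ 0) :
    p / d + (d - 1) * q / d - q = (p - q) / d := by
  field_simp
  ring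

theorem est_oue_z_general
    {Ω : Type*} [MeasureSpace Ω] [IsProbabilityMeasure (ℙ : Measure Ω)]
    (d : ℕ) (hd : 1 ≤ d)
    (p q : ℝ) (hp : 0 ≤ p ∧ p ≤ 1) (hq : 0 ≤ q ∧ q ≤ 1) (hpq : p ≠ q)
    (n : ℕ) (hn : 0 < n)
    (f : ℝ)
    (holds : Fin n → Bool)
    (hcount : (∑ i, if holds i then (1 : ℝ) else 0) = f * n)
    (report : Fin n → Ω → Bool)
    (hmeas : ∀ i, Measurable (report i))
    (hps : ∀ i, holds i = true →
      ℙ {ω | report i ω = true}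
        = ENNReal.ofReal (p / (d : ℝ) + ((d : ℝ) - 1) * q / (d : ℝ)))
    (hqs : ∀ i, holds i = false →
      ℙ {ω | report i ω = true} = ENNReal.ofReal q) :
    ∫ ω, (d : ℝ) * ((∑ i, if report i ω then (1 : ℝ) else 0) - (n : ℝ) * q)
        / ((n : ℝ) * (p - q)) ∂ℙ = f := by
  set P : ℝ := p / d + (d - 1) * q / d
  have hd' : (1 : ℝ) ≤ d := by exact_mod_cast hd
  have hP : 0 ≤ P := by
    have : (0 : ℝ) ≤ d - 1 := by linarith
    have := hp.1
    have := hq.1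
    positivity
  have hprob : ∀ i, (ℙ : Measure Ω).real {ω | report i ω = true} = if holds i then P else q := by
    intro i
    cases h : holds i
    · rw [measureReal_def, hqs i h, if_neg Bool.false_ne_true, ENNReal.toReal_ofReal hq.1]
    · rw [measureReal_def, hps i h, if_pos rfl, ENNReal.toReal_ofReal hP]
  have hmean : ∫ ω, (∑ i, if report i ω then (1 : ℝ) else 0) ∂ℙ
      = f * n * ((p - q) / d) + n * q := by
    rw [integral_sum_ite_one_zero hmeas, Finset.sum_congr rfl fun i _ => hprob i,
      Finset.sum_ite_eq_card_mul_add, hcount, mixed_prob_sub p q (by positivity),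
      Finset.card_univ, Fintype.card_fin]
  rw [integral_mul_sub_div (integrable_finsetSum _ fun i _ => integrable_ite_one_zero (hmeas i)),
    hmean]
  have hn0 : (n : ℝ) ≠ 0 := by positivity
  have hpq0 : p - q ≠ 0 := sub_ne_zero.mpr hpq
  field_simp
  ring

/-- Unbiasedness of the RS+FD[OUE-z] estimator (Theorem `est_oue_z`). -/
theorem est_oue_z
    {Ω : Type*} [MeasureSpace Ω] [IsProbabilityMeasure (ℙ : Measure Ω)]
    (d : ℕ) (hd : 1 ≤ d)
    (p q : ℝ) (hp : 0 ≤ p ∧ p ≤ 1) (hq : 0 ≤ q ∧ q ≤ 1) (hpq : p ≠ q)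
    (n : ℕ) (hn : 0 < n)
    (f : ℝ) (hf0 : 0 ≤ f) (hf1 : f ≤ 1)
    (holds : Fin n → Bool)
    (hcount : (∑ i, if holds i then (1 : ℝ) else 0) = f * n)
    (report : Fin n → Ω → Bool)
    (hmeas : ∀ i, Measurable (report i))
    (hindep : iIndepFun report ℙ)
    (hps : ∀ i, holds i = true →
      ℙ {ω | report i ω = true}
        = ENNReal.ofReal (p / (d : ℝ) + ((d : ℝ) - 1) * q / (d : ℝ)))
    (hqs : ∀ i, holds i = false →
      ℙ {ω | report i ω = true} = ENNReal.ofReal q) :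
    ∫ ω, (d : ℝ) * ((∑ i, if report i ω then (1 : ℝ) else 0) - (n : ℝ) * q)
        / ((n : ℝ) * (p - q)) ∂ℙ = f :=
  est_oue_z_general d hd p q hp hq hpq n hn f holds hcount report hmeas hps hqs
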